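/- arXiv:1112.1960 — 3 statements merged into one kernel-verified Lean document; each statement's English description precedes it below -/
import Mathlib

section
/- Let H₁, H₂ be real Hilbert spaces and L : H₁ → H₂ a bounded linear operator such that A := L* L is surjective. Then A is 3*-monotone: for every pair (x, x*) ∈ H₁ × H₁, the supremum over all (y, y*) with y* = A y of ⟨x - y, y* - x*⟩ is finite. More precisely, writing x* = A x₀ (possible by surjectivity), for every y ∈ H₁ one has ⟨x - y, A y - A x₀⟩ ≤ (1/4)‖L(x - x₀)‖². -/
open scoped RealInnerProductSpace

theorem stmt_4 {H₁ H₂ : Type*}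
    [NormedAddCommGroup H₁] [InnerProductSpace ℝ H₁] [CompleteSpace H₁]
    [NormedAddCommGroup H₂] [InnerProductSpace ℝ H₂] [CompleteSpace H₂]
    (L : H₁ →L[ℝ] H₂)
    (A : H₁ → H₁) (hA : ∀ u, A u = (ContinuousLinearMap.adjoint L) (L u))
    (hsurj : Function.Surjective A) :
    (∀ x xstar : H₁, BddAbove (Set.range fun y => ⟪x - y, A y - xstar⟫)) ∧
    (∀ x x₀ y : H₁, ⟪x - y, A y - A x₀⟫ ≤ (1/4 : ℝ) * ‖L (x - x₀)‖ ^ 2) := by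
  have key : ∀ x x₀ y : H₁, ⟪x - y, A y - A x₀⟫ ≤ (1/4 : ℝ) * ‖L (x - x₀)‖ ^ 2 := by
    intro x x₀ y
    have h1 : ⟪x - y, A y - A x₀⟫ = ⟪L (x - y), L (y - x₀)⟫ := by
      rw [hA, hA, show (ContinuousLinearMap.adjoint L) (L y) - (ContinuousLinearMap.adjoint L) (L x₀)
          = (ContinuousLinearMap.adjoint L) (L (y - x₀)) by rw [map_sub, map_sub],
        ContinuousLinearMap.adjoint_inner_right]
    set u := L (x - y)
    set v := L (y - x₀)
    have huv : u + v = L (x - x₀) := by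
      rw [← map_add]; congr 1; abel
    rw [h1, ← huv]
    have h2 := norm_add_sq_real u v
    have h3 : (0:ℝ) ≤ ‖u - v‖ ^ 2 := sq_nonneg _
    have h4 := norm_sub_sq_real u v
    nlinarith [sq_nonneg ‖u + v‖]
  refine ⟨fun x xstar => ?_, key⟩
  obtain ⟨x₀, rfl⟩ := hsurj xstar
  exact ⟨(1/4 : ℝ) * ‖L (x - x₀)‖ ^ 2, by rintro r ⟨y, rfl⟩; exact key x x₀ y⟩
end

section
/- Let H₁, H₂ be real Hilbert spaces, g : H₁ → ℝ ∪ {∞}, L : H₁ → H₂ bounded linear with L* surjective, and d ∈ H₂ with L⁻¹(d) ≠ ∅. Then -d ∈ ∂(g* ∘ (-L*))(b) if and only if L⁻¹(d) ∩ ∂g*(-L* b) ≠ ∅; moreover in this case L⁻¹(d) ⊆ ∂g*(-L* b). -/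
open scoped RealInnerProductSpace

/-- Fenchel conjugate of an extended-real-valued function on a real Hilbert space. -/
noncomputable def fconj {H : Type*} [NormedAddCommGroup H] [InnerProductSpace ℝ H]
    (g : H → EReal) (v : H) : EReal :=
  ⨆ u : H, ((⟪v, u⟫ : ℝ) : EReal) - g u

/-- Convex subdifferential of an extended-real-valued function. -/
def esubdiff {H : Type*} [NormedAddCommGroup H] [InnerProductSpace ℝ H]
    (φ : H → EReal) (x : H) : Set H :=
  {v | ∀ z : H, φ x + ((⟪v, z - x⟫ : ℝ) : EReal) ≤ φ z}

theorem stmt_8 {H₁ H₂ : Type*}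
    [NormedAddCommGroup H₁] [InnerProductSpace ℝ H₁] [CompleteSpace H₁]
    [NormedAddCommGroup H₂] [InnerProductSpace ℝ H₂] [CompleteSpace H₂]
    (g : H₁ → EReal) (L : H₁ →L[ℝ] H₂)
    (hLstar : Function.Surjective (ContinuousLinearMap.adjoint L))
    (d : H₂) (hd : {u : H₁ | L u = d}.Nonempty) (b : H₂) :
    (-d ∈ esubdiff (fun c => fconj g (-(ContinuousLinearMap.adjoint L c))) b ↔
      ({u : H₁ | L u = d} ∩ esubdiff (fconj g) (-(ContinuousLinearMap.adjoint L b))).Nonempty) ∧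
    (-d ∈ esubdiff (fun c => fconj g (-(ContinuousLinearMap.adjoint L c))) b →
      {u : H₁ | L u = d} ⊆ esubdiff (fconj g) (-(ContinuousLinearMap.adjoint L b))) := by
  set A := ContinuousLinearMap.adjoint L with hA
  have inner_key : ∀ (u : H₁) (c : H₂), L u = d →
      (⟪u, -(A c) - -(A b)⟫ : ℝ) = ⟪-d, c - b⟫ := by
    intro u c hu
    have : -(A c) - -(A b) = A (b - c) := by rw [map_sub]; abel
    rw [this, real_inner_comm, hA, ContinuousLinearMap.adjoint_inner_left, hu]
    rw [inner_neg_left, ← inner_neg_right, neg_sub, real_inner_comm]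
  have subset : -d ∈ esubdiff (fun c => fconj g (-(A c))) b →
      {u : H₁ | L u = d} ⊆ esubdiff (fconj g) (-(A b)) := by
    intro hb u hu z
    obtain ⟨c, hc⟩ := hLstar (-z)
    have hz : z = -(A c) := by rw [hc]; simp
    have := hb c
    rw [hz, inner_key u c hu]
    exact this
  refine ⟨⟨fun h => ?_, fun h => ?_⟩, subset⟩
  · obtain ⟨u, hu⟩ := hd
    exact ⟨u, hu, subset h hu⟩
  · obtain ⟨u, hu, hsub⟩ := h
    intro c
    have := hsub (-(A c))
    rw [inner_key u c hu] at this
    exact this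
end

section
/- Let H₁, H₂ be real Hilbert spaces, g : H₁ → ℝ ∪ {∞} proper convex lower semicontinuous, L : H₁ → H₂ a bounded linear operator with L* L : H₁ → H₁ surjective, λ > 0 and c ∈ H₂. Then the functional I(u) = g(u) + (λ/2)‖L u + c‖² has a unique minimizer on H₁. -/
/-!
Since `L* L` is onto, so is `L*`; the open mapping theorem gives each `u` a preimage `y` under
`L*` with `‖y‖ ≤ C ‖u‖`, so `‖u‖² = ⟪y, L u⟫ ≤ C ‖u‖ ‖L u‖` and `L` is bounded below. By the parallelogram law the
quadratic term `(λ/2) ‖L u + c‖²` is then strongly convex in `u`, hence so is the whole functional,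
which is also bounded below because `g` has a continuous affine minorant (separate a point below
the graph from the closed convex epigraph). For a lower semicontinuous, bounded below, strongly
convex function on a Banach space, the midpoint inequality forces every minimizing sequence to be
Cauchy, lower semicontinuity makes its limit a minimizer, and the same inequality shows that two
minimizers coincide.
-/

open scoped RealInnerProductSpace

/-- Convexity for extended-real-valued functions. -/
def EConvex {H : Type*} [NormedAddCommGroup H] [InnerProductSpace ℝ H]
    (g : H → EReal) : Prop :=
  ∀ x y : H, ∀ a b : ℝ, 0 ≤ a → 0 ≤ b → a + b = 1 →
    g (a • x + b • y) ≤ (a : EReal) * g x + (b : EReal) * g y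

/-- Properness for extended-real-valued functions. -/
def EProper {H : Type*} [NormedAddCommGroup H] [InnerProductSpace ℝ H]
    (g : H → EReal) : Prop :=
  (∃ x, g x ≠ ⊤) ∧ ∀ x, g x ≠ ⊥

open Filter Topology

theorem LowerSemicontinuous.isClosed_realEpigraph {α : Type*} [TopologicalSpace α]
    {f : α → EReal} (hf : LowerSemicontinuous f) : IsClosed {p : α × ℝ | f p.1 ≤ p.2} :=
  hf.isClosed_epigraph.preimage (continuous_id.prodMap continuous_coe_real_ereal)

theorem LowerSemicontinuous.le_of_tendsto {ι α γ : Type*} [TopologicalSpace α] [LinearOrder γ]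
    [DenselyOrdered γ] {l : Filter ι} [l.NeBot] {F : α → γ} (hF : LowerSemicontinuous F)
    {w : ι → α} {x : α} (hw : Tendsto w l (𝓝 x)) {m : γ}
    (hm : ∀ z, m < z → ∀ᶠ i in l, F (w i) < z) : F x ≤ m :=
  le_of_forall_gt_imp_ge_of_dense fun z hz => not_lt.1 fun hzx =>
    let ⟨_, h⟩ := ((hw.eventually (hF x z hzx)).and (hm z hz)).exists
    lt_asymm h.1 h.2

theorem LowerSemicontinuous.add_coe_of_continuous {α : Type*} [TopologicalSpace α]
    {f : α → EReal} {q : α → ℝ} (hf : LowerSemicontinuous f) (hq : Continuous q) :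
    LowerSemicontinuous fun x => f x + q x :=
  hf.add' (continuous_coe_real_ereal.comp hq).lowerSemicontinuous fun _ =>
    EReal.continuousAt_add (Or.inr (EReal.coe_ne_bot _)) (Or.inr (EReal.coe_ne_top _))

theorem norm_midpoint_sq {E : Type*} [NormedAddCommGroup E] [InnerProductSpace ℝ E] (a b : E) :
    ‖midpoint ℝ a b‖ ^ 2 = (‖a‖ ^ 2 + ‖b‖ ^ 2) / 2 - ‖a - b‖ ^ 2 / 4 := by
  have := parallelogram_law_with_norm ℝ a b
  rw [midpoint_eq_smul_add, norm_smul, invOf_eq_inv, norm_inv, Real.norm_two]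
  linear_combination (1/4 : ℝ) * this

/-- Midpoint strong convexity with modulus `κ`, phrased through real upper bounds so that the
value `⊤` needs no case analysis. -/
def MidpointStronglyConvex {E : Type*} [NormedAddCommGroup E] [NormedSpace ℝ E] (κ : ℝ)
    (F : E → EReal) : Prop :=
  ∀ u v : E, ∀ a b : ℝ, F u ≤ a → F v ≤ b →
    F (midpoint ℝ u v) ≤ ((a + b) / 2 - κ * ‖u - v‖ ^ 2 : ℝ)

namespace MidpointStronglyConvex

variable {E : Type*} [NormedAddCommGroup E] [NormedSpace ℝ E] {κ m : ℝ} {F : E → EReal}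

theorem mul_norm_sub_sq_le (hF : MidpointStronglyConvex κ F) (hm : ∀ x, (m : EReal) ≤ F x)
    {u v : E} {a b : ℝ} (hu : F u ≤ ((m + a : ℝ) : EReal)) (hv : F v ≤ ((m + b : ℝ) : EReal)) :
    κ * ‖u - v‖ ^ 2 ≤ (a + b) / 2 := by
  have hmid := EReal.coe_le_coe_iff.1 ((hm _).trans (hF u v _ _ hu hv))
  linarith

theorem cauchySeq (hF : MidpointStronglyConvex κ F) (hκ : 0 < κ) (hm : ∀ x, (m : EReal) ≤ F x)
    {w : ℕ → E} (hw : ∀ n, F (w n) ≤ ((m + 1 / (n + 1) : ℝ) : EReal)) : CauchySeq w := by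
  refine cauchySeq_of_le_tendsto_0 (fun N : ℕ => √(1 / (N + 1) / κ)) (fun n p N hn hp => ?_) ?_
  · have hwN {k : ℕ} (hk : N ≤ k) : F (w k) ≤ ((m + 1 / (N + 1) : ℝ) : EReal) :=
      (hw k).trans (EReal.coe_le_coe_iff.2 (by gcongr))
    rw [dist_eq_norm, Real.le_sqrt (norm_nonneg _) (by positivity), le_div_iff₀ hκ, mul_comm]
    linarith [hF.mul_norm_sub_sq_le hm (hwN hn) (hwN hp)]
  · simpa using (tendsto_one_div_add_atTop_nhds_zero_nat.div_const κ).sqrt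

theorem exists_unique_forall_le [CompleteSpace E] (hF : MidpointStronglyConvex κ F) (hκ : 0 < κ)
    (hlsc : LowerSemicontinuous F) (hfin : ∃ x, F x ≠ ⊤) (hbdd : ∃ B : ℝ, ∀ x, (B : EReal) ≤ F x) :
    ∃! x, ∀ y, F x ≤ F y := by
  obtain ⟨m, hm⟩ : ∃ m : ℝ, (m : EReal) = ⨅ x, F x := by
    obtain ⟨x₀, hx₀⟩ := hfin
    obtain ⟨B, hB⟩ := hbdd
    exact ⟨_, EReal.coe_toReal (ne_top_of_le_ne_top hx₀ (iInf_le _ x₀))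
      (ne_bot_of_le_ne_bot (EReal.coe_ne_bot B) (le_iInf hB))⟩
  have hle (x : E) : (m : EReal) ≤ F x := hm ▸ iInf_le F x
  have hε : Tendsto (fun n : ℕ => ((m + 1 / (n + 1) : ℝ) : EReal)) atTop (𝓝 m) := by
    have := (continuous_coe_real_ereal.tendsto _).comp
      (tendsto_one_div_add_atTop_nhds_zero_nat.const_add m)
    rwa [add_zero] at this
  have hmin (n : ℕ) : ∃ x, F x < ((m + 1 / (n + 1) : ℝ) : EReal) :=
    iInf_lt_iff.1 (hm ▸ EReal.coe_lt_coe_iff.2 (lt_add_of_pos_right m Nat.one_div_pos_of_nat))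
  choose w hw using hmin
  obtain ⟨x, hx⟩ := cauchySeq_tendsto_of_complete (hF.cauchySeq hκ hle fun n => (hw n).le)
  have hxm : F x ≤ m := hlsc.le_of_tendsto hx fun z hz =>
    (hε.eventually_lt_const hz).mono fun n hn => (hw n).trans hn
  refine ⟨x, fun y => hxm.trans (hle y), fun y hy => ?_⟩
  have hyx := hF.mul_norm_sub_sq_le hle (a := 0) (b := 0) (by simpa using (hy x).trans hxm)
    (by simpa using hxm)
  rw [← sub_eq_zero, ← norm_eq_zero, ← sq_nonpos_iff]
  nlinarith

end MidpointStronglyConvex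

namespace ContinuousLinearMap

variable {E F : Type*} [NormedAddCommGroup E] [InnerProductSpace ℝ E]
  [NormedAddCommGroup F] [InnerProductSpace ℝ F] (L : E →L[ℝ] F) (c : F) {C : ℝ}

theorem exists_norm_le_mul_norm_of_surjective_adjoint [CompleteSpace E] [CompleteSpace F]
    (hL : Function.Surjective (adjoint L)) :
    ∃ C > 0, ∀ u, ‖u‖ ≤ C * ‖L u‖ := by
  obtain ⟨C, hC, hpre⟩ := (adjoint L).exists_preimage_norm_le hL
  refine ⟨C, hC, fun u => ?_⟩
  obtain ⟨y, rfl, hy⟩ := hpre u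
  rcases (norm_nonneg (adjoint L y)).eq_or_lt with h | h
  · rw [← h]; positivity
  refine le_of_mul_le_mul_right ?_ h
  calc ‖adjoint L y‖ * ‖adjoint L y‖ = ⟪y, L (adjoint L y)⟫ := by
        rw [← adjoint_inner_left, real_inner_self_eq_norm_mul_norm]
    _ ≤ ‖y‖ * ‖L (adjoint L y)‖ := real_inner_le_norm _ _
    _ ≤ C * ‖adjoint L y‖ * ‖L (adjoint L y)‖ := by gcongr
    _ = C * ‖L (adjoint L y)‖ * ‖adjoint L y‖ := by ring

theorem norm_map_midpoint_add_sq_le (hC : 0 < C) (hL : ∀ u, ‖u‖ ≤ C * ‖L u‖) (u v : E) :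
    ‖L (midpoint ℝ u v) + c‖ ^ 2 ≤
      (‖L u + c‖ ^ 2 + ‖L v + c‖ ^ 2) / 2 - ‖u - v‖ ^ 2 / (4 * C ^ 2) := by
  have hmid : L (midpoint ℝ u v) + c = midpoint ℝ (L u + c) (L v + c) := by
    simp only [midpoint_eq_smul_add, invOf_eq_inv, map_smul, map_add]
    module
  have hsub : ‖u - v‖ ^ 2 ≤ C ^ 2 * ‖(L u + c) - (L v + c)‖ ^ 2 := by
    rw [add_sub_add_right_eq_sub, ← map_sub, ← mul_pow]
    exact pow_le_pow_left₀ (norm_nonneg _) (hL _) 2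
  have hdiv : ‖u - v‖ ^ 2 / (4 * C ^ 2) ≤ ‖(L u + c) - (L v + c)‖ ^ 2 / 4 := by
    rw [div_le_div_iff₀ (by positivity) (by positivity)]
    linarith
  rw [hmid, norm_midpoint_sq]
  linarith

theorem bddBelow_range_apply_add_mul_norm_sq (ψ : E →L[ℝ] ℝ) {lam : ℝ} (hlam : 0 < lam)
    (hC : 0 < C) (hL : ∀ u, ‖u‖ ≤ C * ‖L u‖) :
    BddBelow (Set.range fun u => ψ u + lam / 2 * ‖L u + c‖ ^ 2) := by
  set K := ‖ψ‖ * C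
  refine ⟨-K * ‖c‖ - K ^ 2 / (2 * lam), ?_⟩
  rintro _ ⟨u, rfl⟩
  have hψ : -(K * (‖L u + c‖ + ‖c‖)) ≤ ψ u := by
    have hLu : ‖L u‖ ≤ ‖L u + c‖ + ‖c‖ := by simpa using norm_sub_le (L u + c) c
    calc -(K * (‖L u + c‖ + ‖c‖)) ≤ -(‖ψ‖ * (C * ‖L u‖)) := by
          simp only [K, mul_assoc]; gcongr
      _ ≤ -(‖ψ‖ * ‖u‖) := by gcongr; exact hL u
      _ ≤ ψ u := by
          rw [neg_le]
          exact (neg_le_abs _).trans (ψ.le_opNorm u)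
  have hK : K ^ 2 / (2 * lam) * (2 * lam) = K ^ 2 := div_mul_cancel₀ _ (by positivity)
  nlinarith [sq_nonneg (lam * ‖L u + c‖ - K)]

end ContinuousLinearMap

namespace EConvex

variable {H : Type*} [NormedAddCommGroup H] [InnerProductSpace ℝ H] {g : H → EReal}

theorem convex_realEpigraph (hg : EConvex g) : Convex ℝ {p : H × ℝ | g p.1 ≤ p.2} := by
  rintro ⟨x, s⟩ (hx : g x ≤ s) ⟨y, t⟩ (hy : g y ≤ t) a b ha hb hab
  calc g (a • x + b • y) ≤ a * g x + b * g y := hg x y a b ha hb hab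
    _ ≤ a * s + b * t := add_le_add (mul_le_mul_of_nonneg_left hx (by exact_mod_cast ha))
        (mul_le_mul_of_nonneg_left hy (by exact_mod_cast hb))
    _ = ((a * s + b * t : ℝ) : EReal) := by norm_cast

theorem le_midpoint (hg : EConvex g) {u v : H} {a b : ℝ} (hu : g u ≤ a) (hv : g v ≤ b) :
    g (midpoint ℝ u v) ≤ ((a + b) / 2 : ℝ) := by
  have hhalf : (0 : EReal) ≤ ((1 / 2 : ℝ) : EReal) := by norm_num
  calc g (midpoint ℝ u v) = g ((1 / 2 : ℝ) • u + (1 / 2 : ℝ) • v) := by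
        rw [midpoint_eq_smul_add, smul_add, invOf_eq_inv, one_div]
    _ ≤ ((1 / 2 : ℝ) : EReal) * g u + ((1 / 2 : ℝ) : EReal) * g v :=
        hg u v _ _ (by norm_num) (by norm_num) (by norm_num)
    _ ≤ ((1 / 2 : ℝ) : EReal) * a + ((1 / 2 : ℝ) : EReal) * b :=
        add_le_add (mul_le_mul_of_nonneg_left hu hhalf) (mul_le_mul_of_nonneg_left hv hhalf)
    _ = ((a + b) / 2 : ℝ) := by norm_cast; ring_nf

theorem exists_affine_minorant (hgc : EConvex g) (hgp : EProper g)
    (hglsc : LowerSemicontinuous g) :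
    ∃ (ψ : H →L[ℝ] ℝ) (b : ℝ), ∀ x, ((ψ x + b : ℝ) : EReal) ≤ g x := by
  obtain ⟨⟨x₀, hx₀⟩, hbot⟩ := hgp
  set r₀ : ℝ := (g x₀).toReal
  have hr₀ : g x₀ = r₀ := (EReal.coe_toReal hx₀ (hbot x₀)).symm
  obtain ⟨f, u, hfu, hepi⟩ := geometric_hahn_banach_point_closed hgc.convex_realEpigraph
    hglsc.isClosed_realEpigraph (show (x₀, r₀ - 1) ∉ {p : H × ℝ | g p.1 ≤ p.2} from fun h =>
      (sub_one_lt r₀).not_ge (EReal.coe_le_coe_iff.1 (hr₀ ▸ h)))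
  set β : ℝ := f (0, 1)
  have hsplit (x : H) (t : ℝ) : f (x, t) = f (x, 0) + t * β := by
    rw [show (x, t) = (x, 0) + t • ((0 : H), (1 : ℝ)) by simp, map_add, map_smul, smul_eq_mul]
  have hβ : 0 < β := by
    have hr₀u := hepi (x₀, r₀) (by simp [hr₀])
    rw [hsplit] at hfu hr₀u
    linarith
  refine ⟨(-β⁻¹) • f.comp (.inl ℝ H ℝ), u / β, fun x => EReal.le_of_forall_lt_iff_le.1 ?_⟩
  intro t ht
  have htu := hepi (x, t) ht.le
  rw [hsplit] at htu
  refine EReal.coe_le_coe_iff.2 ?_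
  change -β⁻¹ * f (x, 0) + u / β ≤ t
  rw [neg_mul, ← sub_eq_neg_add, ← div_eq_inv_mul, div_sub_div_same, div_le_iff₀ hβ]
  linarith

theorem midpointStronglyConvex_add (hg : EConvex g) {q : H → ℝ} {κ : ℝ}
    (hq : ∀ u v, q (midpoint ℝ u v) ≤ (q u + q v) / 2 - κ * ‖u - v‖ ^ 2) :
    MidpointStronglyConvex κ fun u => g u + q u := by
  have hsub {u : H} {a : ℝ} (hu : g u + q u ≤ a) : g u ≤ ((a - q u : ℝ) : EReal) := by
    rwa [EReal.coe_sub, EReal.le_sub_iff_add_le (.inl (EReal.coe_ne_bot _))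
      (.inl (EReal.coe_ne_top _))]
  intro u v a b hu hv
  calc g (midpoint ℝ u v) + q (midpoint ℝ u v)
      ≤ (((a - q u + (b - q v)) / 2 : ℝ) : EReal) + q (midpoint ℝ u v) :=
        add_le_add_left (hg.le_midpoint (hsub hu) (hsub hv)) _
    _ = (((a - q u + (b - q v)) / 2 + q (midpoint ℝ u v) : ℝ) : EReal) := by norm_cast
    _ ≤ ((a + b) / 2 - κ * ‖u - v‖ ^ 2 : ℝ) := EReal.coe_le_coe_iff.2 (by linarith [hq u v])

end EConvex

theorem stmt_9 {H₁ H₂ : Type*}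
    [NormedAddCommGroup H₁] [InnerProductSpace ℝ H₁] [CompleteSpace H₁]
    [NormedAddCommGroup H₂] [InnerProductSpace ℝ H₂] [CompleteSpace H₂]
    (g : H₁ → EReal) (hgp : EProper g) (hgc : EConvex g) (hglsc : LowerSemicontinuous g)
    (L : H₁ →L[ℝ] H₂)
    (hsurj : Function.Surjective (fun u => (ContinuousLinearMap.adjoint L) (L u)))
    (lam : ℝ) (hlam : 0 < lam) (c : H₂) :
    ∃! uhat : H₁, ∀ u : H₁,
      g uhat + ((lam / 2 * ‖L uhat + c‖ ^ 2 : ℝ) : EReal) ≤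
      g u + ((lam / 2 * ‖L u + c‖ ^ 2 : ℝ) : EReal) := by
  obtain ⟨C, hC, hLC⟩ := L.exists_norm_le_mul_norm_of_surjective_adjoint hsurj.of_comp
  obtain ⟨ψ, b, hψ⟩ := hgc.exists_affine_minorant hgp hglsc
  obtain ⟨B, hB⟩ := L.bddBelow_range_apply_add_mul_norm_sq c ψ hlam hC hLC
  refine MidpointStronglyConvex.exists_unique_forall_le (κ := lam / 2 / (4 * C ^ 2))
    (hgc.midpointStronglyConvex_add fun u v => ?_) (by positivity)
    (hglsc.add_coe_of_continuous (by fun_prop)) ?_ ⟨B + b, fun u => ?_⟩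
  · linear_combination (lam / 2) * L.norm_map_midpoint_add_sq_le c hC hLC u v
  · obtain ⟨x₀, hx₀⟩ := hgp.1
    exact ⟨x₀, EReal.add_ne_top hx₀ (EReal.coe_ne_top _)⟩
  · calc ((B + b : ℝ) : EReal)
        ≤ ((ψ u + b : ℝ) : EReal) + ((lam / 2 * ‖L u + c‖ ^ 2 : ℝ) : EReal) := by
          norm_cast; linarith [hB ⟨u, rfl⟩]
      _ ≤ _ := add_le_add_left (hψ u) _
end
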